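/- For fixed positive integers m, r, n, there exists t (depending only on m, r, n) such that every increasing chain S₀ ⊆ S₁ ⊆ ⋯ ⊆ S_t of antichains of ℕ^m × Fin n with S_u ⊆ {(ξ,h) : |ξ| ≤ 2^u·r} is not strictly increasing, i.e., S_u = S_{u+1} for some u < t. -/

import Mathlib

/-!
A strictly increasing chain `S₀ ⊊ ⋯ ⊊ S_t` of antichains yields a bad sequence: pick
`x_u ∈ S_{u+1} \ S_u`; for `u < v` both `x_u` and `x_v` lie in the antichain `S_{v+1}` and
`x_u ∈ S_v ∌ x_v`, so they are distinct and incomparable. The height bound leaves only finitely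
many choices for each term, so if bad sequences existed of every length, Kőnig's lemma would
assemble them into an infinite bad sequence, contradicting Dickson's lemma.
-/

/-- The height `|σ| = ∑_{i<m} σ(i)` of a multi-index. -/
def height {m : ℕ} (σ : Fin m → ℕ) : ℕ := ∑ i, σ i

/-- The product order on `ℕ^m × Fin n`: `(σ,k) ≤ (τ,ℓ)` iff `σ ≤ τ`
componentwise and `k = ℓ`. -/
def prodLE {m n : ℕ} (p q : (Fin m → ℕ) × Fin n) : Prop :=
  p.1 ≤ q.1 ∧ p.2 = q.2

lemma le_const_of_height_le {m : ℕ} {σ : Fin m → ℕ} {B : ℕ} (h : height σ ≤ B) :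
    σ ≤ fun _ => B :=
  fun i => (Finset.single_le_sum (fun j _ => Nat.zero_le (σ j)) (Finset.mem_univ i)).trans h

lemma finite_setOf_height_le (m n B : ℕ) :
    {p : (Fin m → ℕ) × Fin n | height p.1 ≤ B}.Finite :=
  ((Set.finite_Iic _).prod Set.finite_univ).subset
    fun _ hp => ⟨le_const_of_height_le hp, Set.mem_univ _⟩

lemma wellQuasiOrdered_prodLE (m n : ℕ) : WellQuasiOrdered (prodLE (m := m) (n := n)) :=
  wellQuasiOrdered_le.prod (Finite.wellQuasiOrdered _)

theorem WellQuasiOrdered.exists_rel_of_forall_mem_finite {α : Type*} {r : α → α → Prop}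
    (hr : WellQuasiOrdered r) {B : ℕ → Set α} (hB : ∀ u, (B u).Finite) :
    ∃ t, ∀ x : Fin t → α, (∀ u : Fin t, x u ∈ B u) → ∃ u v : Fin t, u < v ∧ r (x u) (x v) := by
  by_contra! hbad
  let Bad (t : ℕ) :=
    {x : Fin t → α // (∀ u : Fin t, x u ∈ B u) ∧ ∀ u v : Fin t, u < v → ¬ r (x u) (x v)}
  have (t : ℕ) : Nonempty (Bad t) :=
    let ⟨x, hx⟩ := hbad t; ⟨⟨x, hx⟩⟩
  have (t : ℕ) : Finite (Bad t) :=
    have : Finite (Set.univ.pi fun u : Fin t => B u) :=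
      (Set.Finite.pi fun u : Fin t => hB u).to_subtype
    Finite.of_injective (β := Set.univ.pi fun u : Fin t => B u)
      (fun x => ⟨x.1, fun u _ => x.2.1 u⟩)
      fun _ _ hxy => Subtype.ext (by simpa using congrArg Subtype.val hxy)
  let restrict {i j : ℕ} (hij : i ≤ j) (x : Bad j) : Bad i :=
    ⟨x.1 ∘ Fin.castLE hij, fun u => x.2.1 (Fin.castLE hij u), fun _ _ huv => x.2.2 _ _ huv⟩
  obtain ⟨f, hf⟩ := exists_seq_forall_proj_of_forall_finite restrict (fun _ _ => rfl)
    (fun _ _ _ _ _ _ => rfl) (fun _ _ => Set.toFinite _)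
  have hcompat {u v : ℕ} (huv : u ≤ v) : (f (u + 1)).1 ⟨u, u.lt_succ_self⟩ =
      (f (v + 1)).1 ⟨u, by omega⟩ := by
    rw [← hf (Nat.succ_le_succ huv)]
    rfl
  obtain ⟨u, v, huv, hruv⟩ := hr fun u => (f (u + 1)).1 ⟨u, u.lt_succ_self⟩
  rw [hcompat huv.le] at hruv
  exact (f (v + 1)).2.2 ⟨u, by omega⟩ ⟨v, v.lt_succ_self⟩ huv hruv

theorem exists_bad_seq_of_ne_of_isAntichain {α : Type*} {r : α → α → Prop} {S : ℕ → Set α}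
    {t : ℕ} (hanti : ∀ u ≤ t, IsAntichain r (S u))
    (hmono : ∀ u v, u ≤ v → v ≤ t → S u ⊆ S v) (hne : ∀ u < t, S u ≠ S (u + 1)) :
    ∃ x : Fin t → α, (∀ u : Fin t, x u ∈ S (u + 1)) ∧ ∀ u v : Fin t, u < v → ¬ r (x u) (x v) := by
  have hnew (u : Fin t) : ∃ p, p ∈ S (u + 1) ∧ p ∉ S u := by
    by_contra! h
    exact hne u u.2 ((hmono _ _ (by omega) (by omega)).antisymm h)
  choose x hx_mem hx_new using hnew
  refine ⟨x, hx_mem, fun u v (huv : u.1 < v.1) hr => ?_⟩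
  have hxu : x u ∈ S v := hmono _ _ huv (by omega) (hx_mem u)
  exact hanti (v + 1) (by omega) (hmono _ _ (by omega) v.2 hxu) (hx_mem v)
    (fun h => hx_new v (h ▸ hxu)) hr

theorem exists_stabilization_bound_general (m r n : ℕ) :
    ∃ t : ℕ, ∀ S : ℕ → Set ((Fin m → ℕ) × Fin n),
      (∀ u ≤ t, IsAntichain prodLE (S u)) →
      (∀ u, ∀ v, u ≤ v → v ≤ t → S u ⊆ S v) →
      (∀ u ≤ t, S u ⊆ {p | height p.1 ≤ 2 ^ u * r}) →
      ∃ u < t, S u = S (u + 1) := by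
  obtain ⟨t, ht⟩ := (wellQuasiOrdered_prodLE m n).exists_rel_of_forall_mem_finite
    (B := fun u => {p | height p.1 ≤ 2 ^ (u + 1) * r}) fun u => finite_setOf_height_le m n _
  refine ⟨t, fun S hanti hmono hheight => ?_⟩
  by_contra! hne
  obtain ⟨x, hx_mem, hx_bad⟩ := exists_bad_seq_of_ne_of_isAntichain hanti hmono hne
  obtain ⟨u, v, huv, hrel⟩ := ht x fun u => hheight _ u.2 (hx_mem u)
  exact hx_bad u v huv hrel

/-- For fixed positive integers `m`, `r`, `n`, there exists `t` (depending only
on `m`, `r`, `n`) such that every increasing chain `S₀ ⊆ S₁ ⊆ ⋯ ⊆ S_t` of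
antichains of `ℕ^m × Fin n` with `S_u ⊆ {(ξ,h) : |ξ| ≤ 2^u · r}` is not
strictly increasing: `S_u = S_{u+1}` for some `u < t`. -/
theorem exists_stabilization_bound (m r n : ℕ) (hm : 0 < m) (hr : 0 < r) (hn : 0 < n) :
    ∃ t : ℕ, ∀ S : ℕ → Set ((Fin m → ℕ) × Fin n),
      (∀ u ≤ t, IsAntichain prodLE (S u)) →
      (∀ u, ∀ v, u ≤ v → v ≤ t → S u ⊆ S v) →
      (∀ u ≤ t, S u ⊆ {p | height p.1 ≤ 2 ^ u * r}) →
      ∃ u < t, S u = S (u + 1) :=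
  exists_stabilization_bound_general m r n
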